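/- Let (f₀,φ₀) be a minimizer of the energy functional, i.e. an admissible pair with 𝓔(f₀,φ₀) = I^k_{M,J}. Then (f₀,φ₀) satisfies the nonlinear Poisson equation Δφ₀ = e^{2φ₀} ∫_{ℝ³} f₀ (e^{2φ₀}+|p|²)^{-1/2} dp in the sense of distributions; that is, for every smooth compactly supported test function ζ : ℝ³ → ℝ, ∫_{ℝ³}∫_{ℝ³} e^{2φ₀(x)} (e^{2φ₀(x)}+|p|²)^{-1/2} f₀(x,p) ζ(x) dp dx + ∫_{ℝ³} ∇φ₀(x)·∇ζ(x) dx = 0. -/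

import Mathlib

open MeasureTheory Real Filter Topology
open scoped ENNReal

noncomputable section

/-- Euclidean 3-space. -/
abbrev E3 := EuclideanSpace ℝ (Fin 3)

/-- `φ` belongs to (a C¹ surrogate of) the space `D¹(ℝ³)`: it is continuously
differentiable, its gradient is square integrable and it vanishes at infinity in
the sense that `{|φ| > a}` has finite measure for every `a > 0`. -/
def IsPotential (φ : E3 → ℝ) : Prop :=
  ContDiff ℝ 1 φ ∧ (∫⁻ x : E3, ENNReal.ofReal (‖gradient φ x‖ ^ 2)) < ⊤ ∧
    ∀ a : ℝ, 0 < a → volume {x : E3 | a < |φ x|} < ⊤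

/-- `f ∈ Γ^k_{M,J}`: `f` is measurable, a.e. nonnegative, with `‖f‖_{L¹} = M` and
`‖f‖_{L^{1+1/k}} ≤ J` (in particular `f ∈ L¹ ∩ L^{1+1/k}`). -/
def InGamma (k M J : ℝ) (f : E3 → E3 → ℝ) : Prop :=
  Measurable (Function.uncurry f) ∧
  (∀ᵐ z : E3 × E3, 0 ≤ f z.1 z.2) ∧
  (∫⁻ z : E3 × E3, ENNReal.ofReal (f z.1 z.2)) = ENNReal.ofReal M ∧
  eLpNorm (Function.uncurry f) (ENNReal.ofReal (1 + 1/k)) volume ≤ ENNReal.ofReal J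

/-- Kinetic energy `E_kin(f,φ) = ∫∫ √(e^{2φ(x)}+|p|²) f(x,p) dp dx` (value in `[0,∞]`). -/
def kinE (f : E3 → E3 → ℝ) (φ : E3 → ℝ) : ℝ≥0∞ :=
  ∫⁻ z : E3 × E3, ENNReal.ofReal (Real.sqrt (Real.exp (2 * φ z.1) + ‖z.2‖ ^ 2) * f z.1 z.2)

/-- Energy functional `𝓔(f,φ) = E_kin(f,φ) + (1/2)∫ |∇φ|²` (value in `[0,∞]`). -/
def energy (f : E3 → E3 → ℝ) (φ : E3 → ℝ) : ℝ≥0∞ :=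
  kinE f φ + (∫⁻ x : E3, ENNReal.ofReal (‖gradient φ x‖ ^ 2)) / 2

/-- `(f,φ)` is admissible: `f ∈ Γ^k_{M,J}`, `φ` is a potential and
`∫∫ √(1+|p|²) f dp dx < ∞`. -/
def Admissible (k M J : ℝ) (f : E3 → E3 → ℝ) (φ : E3 → ℝ) : Prop :=
  InGamma k M J f ∧ IsPotential φ ∧
  (∫⁻ z : E3 × E3, ENNReal.ofReal (Real.sqrt (1 + ‖z.2‖ ^ 2) * f z.1 z.2)) < ⊤

/-- The energy infimum `I^k_{M,J} = inf {𝓔(f,φ) : (f,φ) admissible}`. -/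
def energyInf (k M J : ℝ) : ℝ≥0∞ :=
  sInf { e : ℝ≥0∞ | ∃ f φ, Admissible k M J f φ ∧ e = energy f φ }

lemma grad_eq_fderiv (φ : E3 → ℝ) (x : E3) :
    gradient φ x = (InnerProductSpace.toDual ℝ E3).symm (fderiv ℝ φ x) := rfl

lemma grad_continuous {φ : E3 → ℝ} (h : ContDiff ℝ 1 φ) : Continuous (gradient φ) := by
  have : gradient φ = fun x => (InnerProductSpace.toDual ℝ E3).symm (fderiv ℝ φ x) := rfl
  rw [this]
  exact (InnerProductSpace.toDual ℝ E3).symm.continuous.comp (h.continuous_fderiv one_ne_zero)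

lemma grad_support {ζ : E3 → ℝ} (h : HasCompactSupport ζ) :
    HasCompactSupport (gradient ζ) := by
  have : gradient ζ = fun x => (InnerProductSpace.toDual ℝ E3).symm (fderiv ℝ ζ x) := rfl
  rw [this]
  exact (h.fderiv ℝ).comp_left (g := fun L : E3 →L[ℝ] ℝ => (InnerProductSpace.toDual ℝ E3).symm L) (by simp)

lemma grad_add_smul {φ ζ : E3 → ℝ} (hφ : ContDiff ℝ 1 φ) (hζ : ContDiff ℝ 1 ζ) (t : ℝ) (x : E3) :
    gradient (fun y => φ y + t * ζ y) x = gradient φ x + t • gradient ζ x := by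
  have hφd : DifferentiableAt ℝ φ x := hφ.differentiable one_ne_zero x
  have hζd : DifferentiableAt ℝ ζ x := hζ.differentiable one_ne_zero x
  have h1 : HasFDerivAt (fun y => φ y + t * ζ y) (fderiv ℝ φ x + t • fderiv ℝ ζ x) x :=
    (hφd.hasFDerivAt).add ((hζd.hasFDerivAt).const_mul t)
  have h2 : HasGradientAt (fun y => φ y + t * ζ y) (gradient φ x + t • gradient ζ x) x := by
    rw [hasGradientAt_iff_hasFDerivAt]
    refine h1.congr_fderiv ?_
    simp [grad_eq_fderiv]
  exact h2.gradient

lemma sqrt_exp_two (a : ℝ) : Real.sqrt (Real.exp (2 * a)) = Real.exp a := by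
  rw [two_mul, Real.exp_add, Real.sqrt_mul_self (Real.exp_nonneg a)]

lemma ratio_le (c b : ℝ) (hb : 0 ≤ b) :
    Real.exp (2 * c) / Real.sqrt (Real.exp (2 * c) + b) ≤ Real.exp c := by
  have h1 : Real.exp c ≤ Real.sqrt (Real.exp (2 * c) + b) := by
    rw [← sqrt_exp_two c]
    exact Real.sqrt_le_sqrt (by linarith)
  have h2 : (0:ℝ) < Real.exp c := Real.exp_pos c
  calc Real.exp (2 * c) / Real.sqrt (Real.exp (2 * c) + b)
      ≤ Real.exp (2 * c) / Real.exp c :=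
        div_le_div_of_nonneg_left (Real.exp_pos _).le h2 h1
    _ = Real.exp c := by rw [← Real.exp_sub]; ring_nf

lemma hasDeriv_pointwise (a zx b fz : ℝ) (hb : 0 ≤ b) (t : ℝ) :
    HasDerivAt (fun s => Real.sqrt (Real.exp (2 * (a + s * zx)) + b) * fz)
      ((Real.exp (2 * (a + t * zx)) * zx /
        Real.sqrt (Real.exp (2 * (a + t * zx)) + b)) * fz) t := by
  have hupos : 0 < Real.exp (2 * (a + t * zx)) + b := by positivity
  have h1 : HasDerivAt (fun s : ℝ => 2 * (a + s * zx)) (2 * zx) t := by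
    simpa using (((hasDerivAt_id t).mul_const zx).const_add a).const_mul 2
  have h2 : HasDerivAt (fun s : ℝ => Real.exp (2 * (a + s * zx)) + b)
      (Real.exp (2 * (a + t * zx)) * (2 * zx)) t := (h1.exp).add_const b
  have h3 := (h2.sqrt (ne_of_gt hupos)).mul_const fz
  refine h3.congr_deriv ?_
  have hs : Real.sqrt (Real.exp (2 * (a + t * zx)) + b) ≠ 0 :=
    ne_of_gt (Real.sqrt_pos.mpr hupos)
  field_simp

lemma integrable_of_lintegral_lt {α : Type*} [MeasurableSpace α] {μ : Measure α} {g : α → ℝ}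
    (hm : AEStronglyMeasurable g μ) (h0 : 0 ≤ᵐ[μ] g)
    (h : (∫⁻ x, ENNReal.ofReal (g x) ∂μ) < ⊤) : Integrable g μ := by
  refine ⟨hm, ?_⟩
  rw [hasFiniteIntegral_iff_norm]
  have : (∫⁻ x, ENNReal.ofReal ‖g x‖ ∂μ) = ∫⁻ x, ENNReal.ofReal (g x) ∂μ := by
    apply lintegral_congr_ae
    filter_upwards [h0] with x hx
    rw [Real.norm_eq_abs, abs_of_nonneg hx]
  rwa [this]

lemma lintegral_lt_of_integrable {α : Type*} [MeasurableSpace α] {μ : Measure α} {g : α → ℝ}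
    (h : Integrable g μ) : (∫⁻ x, ENNReal.ofReal (g x) ∂μ) < ⊤ := by
  have h2 := h.2
  rw [hasFiniteIntegral_iff_norm] at h2
  refine lt_of_le_of_lt (lintegral_mono fun x => ?_) h2
  exact ENNReal.ofReal_le_ofReal (le_abs_self _)


section Aux
variable (φ₀ ζ : E3 → ℝ) (f₀ : E3 → E3 → ℝ)

lemma cont_inner_sqrt (hφc : Continuous φ₀) (hζcont : Continuous ζ) (t : ℝ) :
    Continuous fun z : E3 × E3 =>
      Real.exp (2 * (φ₀ z.1 + t * ζ z.1)) + ‖z.2‖ ^ 2 := by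
  apply Continuous.add
  · exact Real.continuous_exp.comp (continuous_const.mul
      ((hφc.comp continuous_fst).add (continuous_const.mul (hζcont.comp continuous_fst))))
  · exact (continuous_snd.norm).pow 2

lemma Ft_aesm (hφc : Continuous φ₀) (hζcont : Continuous ζ)
    (hfsm : AEStronglyMeasurable (Function.uncurry f₀) volume) (t : ℝ) :
    AEStronglyMeasurable (fun z : E3 × E3 =>
      Real.sqrt (Real.exp (2 * (φ₀ z.1 + t * ζ z.1)) + ‖z.2‖ ^ 2) * f₀ z.1 z.2) volume :=
  ((Real.continuous_sqrt.comp (cont_inner_sqrt φ₀ ζ hφc hζcont t)).aestronglyMeasurable).mul hfsm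

lemma Ft_integrable (hφc : Continuous φ₀) (hζcont : Continuous ζ)
    (hfsm : AEStronglyMeasurable (Function.uncurry f₀) volume)
    (hf0 : ∀ᵐ z : E3 × E3, 0 ≤ f₀ z.1 z.2)
    (Cζ : ℝ) (hCζ : ∀ x, |ζ x| ≤ Cζ)
    (hF0int : Integrable (fun z : E3 × E3 =>
      Real.sqrt (Real.exp (2 * φ₀ z.1) + ‖z.2‖ ^ 2) * f₀ z.1 z.2) volume) (t : ℝ) :
    Integrable (fun z : E3 × E3 =>
      Real.sqrt (Real.exp (2 * (φ₀ z.1 + t * ζ z.1)) + ‖z.2‖ ^ 2) * f₀ z.1 z.2) volume := by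
  refine Integrable.mono' (hF0int.const_mul (Real.exp (|t| * Cζ)))
    (Ft_aesm φ₀ ζ f₀ hφc hζcont hfsm t) ?_
  have hCζ0 : 0 ≤ Cζ := le_trans (abs_nonneg _) (hCζ 0)
  filter_upwards [hf0] with z hz
  have h1 : Real.exp (2 * (φ₀ z.1 + t * ζ z.1)) + ‖z.2‖ ^ 2 ≤
      Real.exp (2 * (|t| * Cζ)) * (Real.exp (2 * φ₀ z.1) + ‖z.2‖ ^ 2) := by
    have he : Real.exp (2 * (φ₀ z.1 + t * ζ z.1)) ≤
        Real.exp (2 * (|t| * Cζ)) * Real.exp (2 * φ₀ z.1) := by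
      rw [← Real.exp_add]
      apply Real.exp_le_exp.mpr
      have h2 : t * ζ z.1 ≤ |t| * Cζ := by
        calc t * ζ z.1 ≤ |t * ζ z.1| := le_abs_self _
          _ = |t| * |ζ z.1| := abs_mul _ _
          _ ≤ |t| * Cζ := mul_le_mul_of_nonneg_left (hCζ z.1) (abs_nonneg t)
      nlinarith
    have hone : (1:ℝ) ≤ Real.exp (2 * (|t| * Cζ)) := by
      apply Real.one_le_exp
      have := abs_nonneg t
      positivity
    nlinarith [sq_nonneg ‖z.2‖]
  have h2 : Real.sqrt (Real.exp (2 * (φ₀ z.1 + t * ζ z.1)) + ‖z.2‖ ^ 2) ≤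
      Real.exp (|t| * Cζ) * Real.sqrt (Real.exp (2 * φ₀ z.1) + ‖z.2‖ ^ 2) := by
    calc Real.sqrt (Real.exp (2 * (φ₀ z.1 + t * ζ z.1)) + ‖z.2‖ ^ 2)
        ≤ Real.sqrt (Real.exp (2 * (|t| * Cζ)) * (Real.exp (2 * φ₀ z.1) + ‖z.2‖ ^ 2)) :=
          Real.sqrt_le_sqrt h1
      _ = Real.exp (|t| * Cζ) * Real.sqrt (Real.exp (2 * φ₀ z.1) + ‖z.2‖ ^ 2) := by
          rw [Real.sqrt_mul (Real.exp_nonneg _)]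
          congr 1
          rw [two_mul, Real.exp_add, Real.sqrt_mul_self (Real.exp_nonneg _)]
  rw [Real.norm_eq_abs, abs_of_nonneg (mul_nonneg (Real.sqrt_nonneg _) hz)]
  calc Real.sqrt (Real.exp (2 * (φ₀ z.1 + t * ζ z.1)) + ‖z.2‖ ^ 2) * f₀ z.1 z.2
      ≤ (Real.exp (|t| * Cζ) * Real.sqrt (Real.exp (2 * φ₀ z.1) + ‖z.2‖ ^ 2)) * f₀ z.1 z.2 :=
        mul_le_mul_of_nonneg_right h2 hz
    _ = Real.exp (|t| * Cζ) * (Real.sqrt (Real.exp (2 * φ₀ z.1) + ‖z.2‖ ^ 2) * f₀ z.1 z.2) := by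
        ring


lemma A_hasDeriv (hφc : Continuous φ₀) (hζcont : Continuous ζ) (hζc : HasCompactSupport ζ)
    (hfsm : AEStronglyMeasurable (Function.uncurry f₀) volume)
    (hf0 : ∀ᵐ z : E3 × E3, 0 ≤ f₀ z.1 z.2)
    (hfInt : Integrable (Function.uncurry f₀) volume)
    (hF0int : Integrable (fun z : E3 × E3 =>
      Real.sqrt (Real.exp (2 * φ₀ z.1) + ‖z.2‖ ^ 2) * f₀ z.1 z.2) volume) :
    HasDerivAt (fun t => ∫ z : E3 × E3,
        Real.sqrt (Real.exp (2 * (φ₀ z.1 + t * ζ z.1)) + ‖z.2‖ ^ 2) * f₀ z.1 z.2)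
      (∫ z : E3 × E3,
        (Real.exp (2 * φ₀ z.1) * ζ z.1 / Real.sqrt (Real.exp (2 * φ₀ z.1) + ‖z.2‖ ^ 2))
          * f₀ z.1 z.2) 0 := by
  -- bound for ζ
  obtain ⟨Cζ₀, hCζ₀⟩ := hζc.exists_bound_of_continuousOn hζcont.continuousOn
  set Cζ := max Cζ₀ 0 with hCζdef
  have hCζnn : (0:ℝ) ≤ Cζ := le_max_right _ _
  have hCζ : ∀ x, |ζ x| ≤ Cζ := by
    intro x
    by_cases hx : x ∈ tsupport ζ
    · exact le_trans (by simpa [Real.norm_eq_abs] using hCζ₀ x hx) (le_max_left _ _)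
    · simp [image_eq_zero_of_notMem_tsupport hx, hCζnn]
  -- bound for the derivative integrand
  obtain ⟨C₀, hC₀⟩ := hζc.exists_bound_of_continuousOn
    ((Real.continuous_exp.comp (hφc.add continuous_const : Continuous fun x => φ₀ x + Cζ)).mul
      hζcont.abs).continuousOn
  set C := max C₀ 0 with hCdef
  have hCnn : (0:ℝ) ≤ C := le_max_right _ _
  have hCb : ∀ x ∈ tsupport ζ, Real.exp (φ₀ x + Cζ) * |ζ x| ≤ C := by
    intro x hx
    have h := hC₀ x hx
    exact le_trans ((le_abs_self _).trans h) (le_max_left _ _)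
  set F' : ℝ → E3 × E3 → ℝ := fun t z =>
    (Real.exp (2 * (φ₀ z.1 + t * ζ z.1)) * ζ z.1 /
      Real.sqrt (Real.exp (2 * (φ₀ z.1 + t * ζ z.1)) + ‖z.2‖ ^ 2)) * f₀ z.1 z.2 with hF'def
  have key := hasDerivAt_integral_of_dominated_loc_of_deriv_le (μ := volume) (x₀ := (0:ℝ))
    (F' := F') (s := Metric.ball (0:ℝ) 1) (bound := fun z : E3 × E3 => C * f₀ z.1 z.2) (Metric.ball_mem_nhds _ one_pos)
    (Eventually.of_forall fun t => Ft_aesm φ₀ ζ f₀ hφc hζcont hfsm t)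
    ?hint ?hmeas' ?hbd ?hbint ?hdiff
  case hint =>
    exact Ft_integrable φ₀ ζ f₀ hφc hζcont hfsm hf0 Cζ hCζ hF0int 0
  case hmeas' =>
    apply AEStronglyMeasurable.mul _ hfsm
    apply Continuous.aestronglyMeasurable
    apply Continuous.div
    · exact (Real.continuous_exp.comp (continuous_const.mul
        ((hφc.comp continuous_fst).add
          (continuous_const.mul (hζcont.comp continuous_fst))))).mul
        (hζcont.comp continuous_fst)
    · exact Real.continuous_sqrt.comp (cont_inner_sqrt φ₀ ζ hφc hζcont 0)
    · intro z
      exact ne_of_gt (Real.sqrt_pos.mpr (by positivity))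
  case hbint => exact hfInt.const_mul C
  case hdiff =>
    refine Eventually.of_forall fun z t _ => ?_
    exact hasDeriv_pointwise (φ₀ z.1) (ζ z.1) (‖z.2‖ ^ 2) (f₀ z.1 z.2) (by positivity) t
  case hbd =>
    filter_upwards [hf0] with z hz
    intro t ht
    have htabs : |t| ≤ 1 := by
      rw [Metric.mem_ball, Real.dist_eq, sub_zero] at ht
      exact ht.le
    rw [hF'def]
    simp only
    rw [Real.norm_eq_abs, abs_mul, abs_of_nonneg hz, abs_div, abs_mul,
      abs_of_pos (Real.exp_pos _), abs_of_nonneg (Real.sqrt_nonneg _)]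
    by_cases hzx : ζ z.1 = 0
    · simp [hzx]
      positivity
    · have hmem : z.1 ∈ tsupport ζ := subset_tsupport ζ hzx
      have hb : (0:ℝ) ≤ ‖z.2‖ ^ 2 := by positivity
      have step1 : Real.exp (2 * (φ₀ z.1 + t * ζ z.1)) /
          Real.sqrt (Real.exp (2 * (φ₀ z.1 + t * ζ z.1)) + ‖z.2‖ ^ 2) ≤
          Real.exp (φ₀ z.1 + t * ζ z.1) := ratio_le _ _ hb
      have step2 : Real.exp (φ₀ z.1 + t * ζ z.1) ≤ Real.exp (φ₀ z.1 + Cζ) := by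
        apply Real.exp_le_exp.mpr
        have : t * ζ z.1 ≤ |t| * |ζ z.1| := le_trans (le_abs_self _) (abs_mul _ _).le
        have h2 : |t| * |ζ z.1| ≤ 1 * Cζ :=
          mul_le_mul htabs (hCζ z.1) (abs_nonneg _) zero_le_one
        linarith
      have step3 : Real.exp (φ₀ z.1 + Cζ) * |ζ z.1| ≤ C := hCb z.1 hmem
      have hch : Real.exp (2 * (φ₀ z.1 + t * ζ z.1)) * |ζ z.1| /
          Real.sqrt (Real.exp (2 * (φ₀ z.1 + t * ζ z.1)) + ‖z.2‖ ^ 2) ≤ C := by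
        rw [mul_div_right_comm]
        calc Real.exp (2 * (φ₀ z.1 + t * ζ z.1)) /
            Real.sqrt (Real.exp (2 * (φ₀ z.1 + t * ζ z.1)) + ‖z.2‖ ^ 2) * |ζ z.1|
            ≤ Real.exp (φ₀ z.1 + Cζ) * |ζ z.1| := by
              apply mul_le_mul_of_nonneg_right (le_trans step1 step2) (abs_nonneg _)
          _ ≤ C := step3
      exact mul_le_mul_of_nonneg_right hch hz
  -- conclude
  have h2 := key.2
  have heq : (fun z : E3 × E3 => F' 0 z) = fun z : E3 × E3 =>
      (Real.exp (2 * φ₀ z.1) * ζ z.1 / Real.sqrt (Real.exp (2 * φ₀ z.1) + ‖z.2‖ ^ 2))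
        * f₀ z.1 z.2 := by
    funext z
    rw [hF'def]
    norm_num
  rwa [heq] at h2

end Aux

/-- a minimizer `(f₀,φ₀)` satisfies the nonlinear Poisson equation
`Δφ₀ = e^{2φ₀} ∫ f₀ (e^{2φ₀}+|p|²)^{-1/2} dp` in the sense of distributions. -/
theorem minimizer_solves_poisson (k M J : ℝ)
    (hk : 0 < k) (hk2 : k < 2) (hM : 0 < M) (hJ : 0 < J)
    (f₀ : E3 → E3 → ℝ) (φ₀ : E3 → ℝ)
    (hadm : Admissible k M J f₀ φ₀)
    (hmin : energy f₀ φ₀ = energyInf k M J) :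
    ∀ ζ : E3 → ℝ, ContDiff ℝ (⊤ : ℕ∞) ζ → HasCompactSupport ζ →
      (∫ z : E3 × E3,
          Real.exp (2 * φ₀ z.1) / Real.sqrt (Real.exp (2 * φ₀ z.1) + ‖z.2‖ ^ 2)
            * f₀ z.1 z.2 * ζ z.1)
        + (∫ x : E3, inner ℝ (gradient φ₀ x) (gradient ζ x) : ℝ) = 0 := by
  intro ζ hζtop hζc
  obtain ⟨hγ, ⟨hφ1, hφg, hφv⟩, hfin1⟩ := hadm
  obtain ⟨hfm, hf0, hfM, hfJ⟩ := hγ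
  have hφc : Continuous φ₀ := hφ1.continuous
  have hζ1 : ContDiff ℝ 1 ζ := hζtop.of_le (by simp)
  have hζcont : Continuous ζ := hζ1.continuous
  have hfsm : AEStronglyMeasurable (Function.uncurry f₀) volume := hfm.aestronglyMeasurable
  -- f₀ is integrable
  have hfInt : Integrable (Function.uncurry f₀) volume := by
    refine integrable_of_lintegral_lt hfsm hf0 ?_
    have h : (∫⁻ x : E3 × E3, ENNReal.ofReal (Function.uncurry f₀ x)) = ENNReal.ofReal M := hfM
    rw [h]; exact ENNReal.ofReal_lt_top
  -- the zero potential is admissible, hence energy f₀ φ₀ < ⊤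
  have hzero_adm : Admissible k M J f₀ (fun _ => 0) := by
    refine ⟨⟨hfm, hf0, hfM, hfJ⟩, ⟨contDiff_const, ?_, ?_⟩, hfin1⟩
    · simp [gradient_const]
    · intro a ha
      simp [abs_of_nonneg, not_lt.mpr ha.le]
  have hE0 : energy f₀ (fun _ => 0) < ⊤ := by
    have h1 : kinE f₀ (fun _ => 0) =
        ∫⁻ z : E3 × E3, ENNReal.ofReal (Real.sqrt (1 + ‖z.2‖ ^ 2) * f₀ z.1 z.2) := by
      unfold kinE; norm_num
    have h2 : (∫⁻ x : E3, ENNReal.ofReal (‖gradient (fun _ : E3 => (0:ℝ)) x‖ ^ 2)) = 0 := by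
      simp [gradient_const]
    rw [energy, h1, h2]
    simpa using hfin1
  have hEfin : energy f₀ φ₀ < ⊤ := by
    rw [hmin]
    refine lt_of_le_of_lt (sInf_le ⟨f₀, (fun _ => 0), hzero_adm, rfl⟩) hE0
  have hkinfin : kinE f₀ φ₀ < ⊤ :=
    lt_of_le_of_lt (self_le_add_right _ _) hEfin

  -- gradient facts
  have hacont : Continuous (gradient φ₀) := grad_continuous hφ1
  have hbcont : Continuous (gradient ζ) := grad_continuous hζ1
  have hbsupp : HasCompactSupport (gradient ζ) := grad_support hζc
  have haInt : Integrable (fun x : E3 => ‖gradient φ₀ x‖ ^ 2) volume :=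
    integrable_of_lintegral_lt ((hacont.norm.pow 2).aestronglyMeasurable)
      (Eventually.of_forall fun x => by positivity) hφg
  have hbInt : Integrable (fun x : E3 => ‖gradient ζ x‖ ^ 2) volume := by
    apply Continuous.integrable_of_hasCompactSupport (hbcont.norm.pow 2)
    exact HasCompactSupport.intro hbsupp (fun x hx => by simp [image_eq_zero_of_notMem_tsupport hx])
  have habInt : Integrable (fun x : E3 => (inner ℝ (gradient φ₀ x) (gradient ζ x) : ℝ)) volume := by
    apply Continuous.integrable_of_hasCompactSupport (hacont.inner hbcont)
    apply HasCompactSupport.intro hbsupp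
    intro x hx
    rw [image_eq_zero_of_notMem_tsupport hx, inner_zero_right]
  set Ca := ∫ x : E3, ‖gradient φ₀ x‖ ^ 2 with hCadef
  set Iab := ∫ x : E3, (inner ℝ (gradient φ₀ x) (gradient ζ x) : ℝ) with hIabdef
  set Cb := ∫ x : E3, ‖gradient ζ x‖ ^ 2 with hCbdef
  have hQptw : ∀ t : ℝ, (fun x : E3 => ‖gradient φ₀ x + t • gradient ζ x‖ ^ 2) =
      fun x => ‖gradient φ₀ x‖ ^ 2 + (2 * t) * (inner ℝ (gradient φ₀ x) (gradient ζ x) : ℝ)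
        + t ^ 2 * ‖gradient ζ x‖ ^ 2 := by
    intro t; funext x
    rw [norm_add_sq_real, real_inner_smul_right, norm_smul]
    simp only [Real.norm_eq_abs, mul_pow, sq_abs]
    ring
  have hQint : ∀ t : ℝ, Integrable
      (fun x : E3 => ‖gradient φ₀ x + t • gradient ζ x‖ ^ 2) volume := by
    intro t; rw [hQptw t]
    exact (haInt.add (habInt.const_mul _)).add (hbInt.const_mul _)
  have hQval : ∀ t : ℝ, (∫ x : E3, ‖gradient φ₀ x + t • gradient ζ x‖ ^ 2) =
      Ca + (2 * t) * Iab + t ^ 2 * Cb := by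
    intro t
    have i2 : Integrable (fun x : E3 =>
        (2 * t) * (inner ℝ (gradient φ₀ x) (gradient ζ x) : ℝ)) volume := habInt.const_mul _
    have i3 : Integrable (fun x : E3 => t ^ 2 * ‖gradient ζ x‖ ^ 2) volume := hbInt.const_mul _
    have i1 : Integrable (fun x : E3 => ‖gradient φ₀ x‖ ^ 2
        + (2 * t) * (inner ℝ (gradient φ₀ x) (gradient ζ x) : ℝ)) volume := haInt.add i2
    rw [hQptw t, integral_add i1 i3, integral_add haInt i2, integral_const_mul,
      integral_const_mul]
  -- bound for ζ and integrability of F 0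
  obtain ⟨Cζ₀, hCζ₀⟩ := hζc.exists_bound_of_continuousOn hζcont.continuousOn
  have hCζ : ∀ x, |ζ x| ≤ max Cζ₀ 0 := by
    intro x
    by_cases hx : x ∈ tsupport ζ
    · exact le_trans (by simpa [Real.norm_eq_abs] using hCζ₀ x hx) (le_max_left _ _)
    · simp [image_eq_zero_of_notMem_tsupport hx, le_max_right Cζ₀ 0]
  have hF0int : Integrable (fun z : E3 × E3 =>
      Real.sqrt (Real.exp (2 * φ₀ z.1) + ‖z.2‖ ^ 2) * f₀ z.1 z.2) volume := by
    refine integrable_of_lintegral_lt ?_ ?_ ?_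
    · refine AEStronglyMeasurable.mul ?_ hfsm
      refine Continuous.aestronglyMeasurable ?_
      refine Real.continuous_sqrt.comp (Continuous.add ?_ ((continuous_snd.norm).pow 2))
      exact Real.continuous_exp.comp (continuous_const.mul (hφc.comp continuous_fst))
    · filter_upwards [hf0] with z hz
      exact mul_nonneg (Real.sqrt_nonneg _) hz
    · exact hkinfin
  have hFtint : ∀ t : ℝ, Integrable (fun z : E3 × E3 =>
      Real.sqrt (Real.exp (2 * (φ₀ z.1 + t * ζ z.1)) + ‖z.2‖ ^ 2) * f₀ z.1 z.2) volume :=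
    fun t => Ft_integrable φ₀ ζ f₀ hφc hζcont hfsm hf0 (max Cζ₀ 0) hCζ hF0int t
  have hFtnn : ∀ t : ℝ, 0 ≤ᵐ[volume] (fun z : E3 × E3 =>
      Real.sqrt (Real.exp (2 * (φ₀ z.1 + t * ζ z.1)) + ‖z.2‖ ^ 2) * f₀ z.1 z.2) := by
    intro t
    filter_upwards [hf0] with z hz
    exact mul_nonneg (Real.sqrt_nonneg _) hz
  -- gradient of perturbed potential
  have hgradt : ∀ (t : ℝ) (x : E3), gradient (fun y => φ₀ y + t * ζ y) x
      = gradient φ₀ x + t • gradient ζ x := fun t x => grad_add_smul hφ1 hζ1 t x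
  -- perturbed potentials are admissible
  have hpot : ∀ t : ℝ, IsPotential (fun x => φ₀ x + t * ζ x) := by
    intro t
    refine ⟨hφ1.add (contDiff_const.mul hζ1), ?_, ?_⟩
    · have h1 : (∫⁻ x : E3, ENNReal.ofReal (‖gradient (fun y => φ₀ y + t * ζ y) x‖ ^ 2))
          = ∫⁻ x : E3, ENNReal.ofReal (‖gradient φ₀ x + t • gradient ζ x‖ ^ 2) :=
        lintegral_congr fun x => by rw [hgradt t x]
      rw [h1]
      exact lintegral_lt_of_integrable (hQint t)
    · intro a ha
      have hsub : {x : E3 | a < |φ₀ x + t * ζ x|} ⊆ {x : E3 | a < |φ₀ x|} ∪ tsupport ζ := by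
        intro x hx
        by_cases hmem : x ∈ tsupport ζ
        · exact Or.inr hmem
        · left
          have h0 : ζ x = 0 := image_eq_zero_of_notMem_tsupport hmem
          simpa [h0] using hx
      refine lt_of_le_of_lt (measure_mono hsub) ?_
      exact lt_of_le_of_lt (measure_union_le _ _)
        (ENNReal.add_lt_top.mpr ⟨hφv a ha, hζc.measure_lt_top⟩)
  -- real-valued energy along the perturbation
  set A : ℝ → ℝ := fun t => ∫ z : E3 × E3,
    Real.sqrt (Real.exp (2 * (φ₀ z.1 + t * ζ z.1)) + ‖z.2‖ ^ 2) * f₀ z.1 z.2 with hAdef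
  have hAnn : ∀ t, 0 ≤ A t := fun t => integral_nonneg_of_ae (hFtnn t)
  have hQnn : ∀ t : ℝ, 0 ≤ Ca + (2 * t) * Iab + t ^ 2 * Cb := by
    intro t
    rw [← hQval t]
    exact integral_nonneg fun x => by positivity
  have hkin_t : ∀ t : ℝ, kinE f₀ (fun x => φ₀ x + t * ζ x) = ENNReal.ofReal (A t) := by
    intro t
    rw [hAdef]
    rw [ofReal_integral_eq_lintegral_ofReal (hFtint t) (hFtnn t)]
    simp only [kinE]
  have hEt : ∀ t : ℝ, energy f₀ (fun x => φ₀ x + t * ζ x)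
      = ENNReal.ofReal (A t + (Ca + (2 * t) * Iab + t ^ 2 * Cb) / 2) := by
    intro t
    have hgr : (∫⁻ x : E3, ENNReal.ofReal (‖gradient (fun y => φ₀ y + t * ζ y) x‖ ^ 2))
        = ENNReal.ofReal (Ca + (2 * t) * Iab + t ^ 2 * Cb) := by
      rw [← hQval t, ofReal_integral_eq_lintegral_ofReal (hQint t)
        (Eventually.of_forall fun x => by positivity)]
      exact lintegral_congr fun x => by rw [hgradt t x]
    simp only [energy]
    rw [hkin_t t, hgr, ENNReal.ofReal_add (hAnn t)
      (div_nonneg (hQnn t) (by norm_num)), ENNReal.ofReal_div_of_pos (by norm_num : (0:ℝ) < 2)]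
    norm_num
  -- the minimality inequality in real form
  have hG : ∀ t : ℝ, A 0 + (Ca + (2 * (0:ℝ)) * Iab + (0:ℝ) ^ 2 * Cb) / 2
      ≤ A t + (Ca + (2 * t) * Iab + t ^ 2 * Cb) / 2 := by
    intro t
    have hphi : (fun x : E3 => φ₀ x + (0:ℝ) * ζ x) = φ₀ := by funext x; ring
    have h0 : energy f₀ φ₀
        = ENNReal.ofReal (A 0 + (Ca + (2 * (0:ℝ)) * Iab + (0:ℝ) ^ 2 * Cb) / 2) := by
      conv_lhs => rw [← hphi]
      exact hEt 0
    have hle : energy f₀ φ₀ ≤ energy f₀ (fun x => φ₀ x + t * ζ x) := by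
      rw [hmin]
      exact sInf_le ⟨f₀, _, ⟨⟨hfm, hf0, hfM, hfJ⟩, hpot t, hfin1⟩, rfl⟩
    rw [h0, hEt t] at hle
    refine (ENNReal.ofReal_le_ofReal_iff ?_).mp hle
    exact add_nonneg (hAnn t) (div_nonneg (hQnn t) (by norm_num))
  have hlocal : IsLocalMin (fun t : ℝ => A t + (Ca + (2 * t) * Iab + t ^ 2 * Cb) / 2) 0 :=
    Filter.Eventually.of_forall hG
  -- derivative of the perturbed energy at 0
  set D := ∫ z : E3 × E3, (Real.exp (2 * φ₀ z.1) * ζ z.1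
    / Real.sqrt (Real.exp (2 * φ₀ z.1) + ‖z.2‖ ^ 2)) * f₀ z.1 z.2 with hDdef
  have hAd : HasDerivAt A D 0 :=
    A_hasDeriv φ₀ ζ f₀ hφc hζcont hζc hfsm hf0 hfInt hF0int
  have hpoly : HasDerivAt (fun t : ℝ => (Ca + (2 * t) * Iab + t ^ 2 * Cb) / 2) Iab 0 := by
    have h := ((((hasDerivAt_id (0:ℝ)).const_mul 2).mul_const Iab).const_add Ca).add
      ((hasDerivAt_pow 2 (0:ℝ)).mul_const Cb)
    have h2 := h.div_const 2
    refine h2.congr_deriv ?_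
    norm_num
  have hGd : HasDerivAt (fun t : ℝ => A t + (Ca + (2 * t) * Iab + t ^ 2 * Cb) / 2)
      (D + Iab) 0 := hAd.add hpoly
  have hzero : D + Iab = 0 := hlocal.hasDerivAt_eq_zero hGd
  have hfinal : (∫ z : E3 × E3,
      Real.exp (2 * φ₀ z.1) / Real.sqrt (Real.exp (2 * φ₀ z.1) + ‖z.2‖ ^ 2)
        * f₀ z.1 z.2 * ζ z.1) = D := by
    rw [hDdef]
    congr 1
    funext z
    ring
  rw [hfinal]
  exact hzero
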